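/- Characterization of the kernel of the prolonged symbol of the extended Rapcsák operator: a symmetric trilinear form A on V satisfies A(X, Y, C) = 0 and A(X, P_h Y, J Z) = A(X, P_h Z, J Y) for all X, Y, Z ∈ V if and only if A(X, Y, C) = 0 for all X, Y ∈ V and the arrays (i,j,k) ↦ A(h_i, h_j, v_k) and (i,j,k) ↦ A(h_i, v_j, v_k) are totally symmetric, i.e. invariant under all permutations of the indices (i,j,k) ∈ {1,…,n}³. -/

import Mathlib

/-!
Since `P_h Y = (Y₁, 0)` and `J Z = (0, Z₁)`, the second condition says that the trilinear map
`(X, y, z) ↦ A (X, (y, 0), (0, z))` is symmetric in `y, z`. By multilinearity this only has to be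
checked on basis vectors: for `X = h_i` it is the symmetry of `A (h_i, h_j, v_k)` in `j, k`, and for
`X = v_i`, using the symmetry of `A`, it is equivalent to the total symmetry of `A (h_i, v_j, v_k)`.
-/

set_option synthInstance.maxHeartbeats 1000000
set_option maxHeartbeats 1000000

noncomputable section

/-- The pointwise model `V = (Fin n → ℝ) × (Fin n → ℝ)` of the double tangent space
`T_x(TM)` for a spray on an `n`-dimensional manifold, in an adapted basis. -/
abbrev V (n : ℕ) : Type := (Fin n → ℝ) × (Fin n → ℝ)

/-- The vertical endomorphism `J (x, y) = (0, x)`. -/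
def Jmap (n : ℕ) : V n →ₗ[ℝ] V n where
  toFun p := (0, p.1)
  map_add' a b := by simp
  map_smul' c a := by simp

/-- The horizontal projector `P_h (x, y) = (x, 0)`. -/
def Ph (n : ℕ) : V n →ₗ[ℝ] V n where
  toFun p := (p.1, 0)
  map_add' a b := by simp
  map_smul' c a := by simp

/-- The `j`-th standard basis vector of `Fin n → ℝ`, indexed by `1 ≤ j ≤ n`
(zero if `j` is out of range). -/
def dlt (n j : ℕ) : Fin n → ℝ := fun i => if (i : ℕ) + 1 = j then 1 else 0

/-- The horizontal basis vector `h_j`, `1 ≤ j ≤ n`. -/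
def hvec (n j : ℕ) : V n := (dlt n j, 0)

/-- The vertical basis vector `v_j`, `1 ≤ j ≤ n`. -/
def vvec (n j : ℕ) : V n := (0, dlt n j)

/-- The spray vector `S = h_n`. -/
def Svec (n : ℕ) : V n := hvec n n

/-- The Liouville vector `C = v_n = J S`. -/
def Cvec (n : ℕ) : V n := vvec n n

/-- Bilinear forms on `V n`. -/
abbrev Bil (n : ℕ) := V n →ₗ[ℝ] V n →ₗ[ℝ] ℝ

/-- Trilinear forms on `V n` (bundled). -/
abbrev Tri (n : ℕ) := V n →ₗ[ℝ] V n →ₗ[ℝ] V n →ₗ[ℝ] ℝ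

theorem LinearMap.apply_swap_of_basis {R M M' M'' N P ι κ : Type*} [CommSemiring R]
    [AddCommMonoid M] [AddCommMonoid M'] [AddCommMonoid M''] [AddCommMonoid N] [AddCommMonoid P]
    [Module R M] [Module R M'] [Module R M''] [Module R N] [Module R P]
    (b : Module.Basis ι R M) (c : Module.Basis κ R N)
    (A : M →ₗ[R] M' →ₗ[R] M'' →ₗ[R] P) (f : N →ₗ[R] M') (g : N →ₗ[R] M'')
    (h : ∀ i j k, A (b i) (f (c j)) (g (c k)) = A (b i) (f (c k)) (g (c j))) (x : M) (y z : N) :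
    A x (f y) (g z) = A x (f z) (g y) := by
  let T : M →ₗ[R] N →ₗ[R] N →ₗ[R] P := (A.compl₂ f).compr₂ (LinearMap.lcomp R P g)
  have hT : T = (LinearMap.lflip (R₀ := R)).toLinearMap.comp T :=
    b.ext fun i => LinearMap.ext_basis c c fun j k => h i j k
  exact congr($hT x y z)

/-- With `s a b c := A (h a) (v b) (v c)`, symmetric in `b, c`, the left side says that `s` is
invariant under swapping its first and third indices, the right side its first and second; either
transposition generates all permutations together with that of `b, c`. -/
theorem symm_apply_vert_horiz_vert_iff {R M ι : Type*} [CommSemiring R] [AddCommMonoid M]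
    [Module R M] (A : M →ₗ[R] M →ₗ[R] M →ₗ[R] R)
    (hsym12 : ∀ X Y Z, A X Y Z = A Y X Z) (hsym23 : ∀ X Y Z, A X Y Z = A X Z Y) (h v : ι → M) :
    (∀ a b c, A (v a) (h b) (v c) = A (v a) (h c) (v b)) ↔
      ∀ a b c, A (h a) (v b) (v c) = A (h b) (v a) (v c) := by
  constructor
  · intro H a b c
    calc A (h a) (v b) (v c) = A (v b) (h a) (v c) := hsym12 _ _ _
      _ = A (v b) (h c) (v a) := H b a c
      _ = A (v a) (h c) (v b) := by rw [hsym12, hsym23, hsym12]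
      _ = A (v a) (h b) (v c) := (H a b c).symm
      _ = A (h b) (v a) (v c) := hsym12 _ _ _
  · intro H a b c
    calc A (v a) (h b) (v c) = A (h b) (v a) (v c) := hsym12 _ _ _
      _ = A (h a) (v b) (v c) := (H a b c).symm
      _ = A (h a) (v c) (v b) := hsym23 _ _ _
      _ = A (h c) (v a) (v b) := H a c b
      _ = A (v a) (h c) (v b) := hsym12 _ _ _

lemma dlt_val_succ (n : ℕ) (i : Fin n) : dlt n (i + 1) = Pi.single i 1 := by
  ext j
  simp [dlt, Pi.single_apply, Fin.val_inj]

def adaptedBasis (n : ℕ) : Module.Basis (Fin n ⊕ Fin n) ℝ (V n) :=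
  (Pi.basisFun ℝ (Fin n)).prod (Pi.basisFun ℝ (Fin n))

@[simp] lemma adaptedBasis_inl (n : ℕ) (i : Fin n) : adaptedBasis n (.inl i) = hvec n (i + 1) := by
  simp [adaptedBasis, Module.Basis.prod_apply, hvec, dlt_val_succ]

@[simp] lemma adaptedBasis_inr (n : ℕ) (i : Fin n) : adaptedBasis n (.inr i) = vvec n (i + 1) := by
  simp [adaptedBasis, Module.Basis.prod_apply, vvec, dlt_val_succ]

theorem g3P2_characterization_general (n : ℕ) (A : Tri n)
    (hsym12 : ∀ X Y Z, A X Y Z = A Y X Z) (hsym23 : ∀ X Y Z, A X Y Z = A X Z Y) :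
    ((∀ X Y, A X Y (Cvec n) = 0) ∧
      (∀ X Y Z, A X (Ph n Y) (Jmap n Z) = A X (Ph n Z) (Jmap n Y)))
    ↔
    ((∀ X Y, A X Y (Cvec n) = 0) ∧
      (∀ i j k : ℕ, 1 ≤ i → i ≤ n → 1 ≤ j → j ≤ n → 1 ≤ k → k ≤ n →
        (A (hvec n i) (hvec n j) (vvec n k) = A (hvec n j) (hvec n i) (vvec n k) ∧
         A (hvec n i) (hvec n j) (vvec n k) = A (hvec n i) (hvec n k) (vvec n j) ∧
         A (hvec n i) (vvec n j) (vvec n k) = A (hvec n j) (vvec n i) (vvec n k) ∧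
         A (hvec n i) (vvec n j) (vvec n k) = A (hvec n i) (vvec n k) (vvec n j)))) := by
  refine and_congr_right fun _ => ⟨fun hP i j k _ _ _ _ _ _ => ?_, fun hB => ?_⟩
  · have hvhv (a b c : ℕ) := hP (vvec n a) (hvec n b) (hvec n c)
    exact ⟨hsym12 _ _ _, hP (hvec n i) (hvec n j) (hvec n k),
      (symm_apply_vert_horiz_vert_iff A hsym12 hsym23 (hvec n) (vvec n)).1 hvhv i j k,
      hsym23 _ _ _⟩
  · have hB_fin (a b c : Fin n) := hB (a + 1) (b + 1) (c + 1) (by omega) (by omega) (by omega)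
      (by omega) (by omega) (by omega)
    have hhhv (a b c : Fin n) := (hB_fin a b c).2.1
    have hvhv := (symm_apply_vert_horiz_vert_iff A hsym12 hsym23
      (fun a : Fin n => hvec n (a + 1)) (fun a => vvec n (a + 1))).2 fun a b c => (hB_fin a b c).2.2.1
    intro X Y Z
    refine LinearMap.apply_swap_of_basis (adaptedBasis n) (Pi.basisFun ℝ (Fin n)) A
      (LinearMap.inl ℝ _ _) (LinearMap.inr ℝ _ _) ?_ X Y.1 Z.1
    rintro (a | a) b c
    · simpa [hvec, vvec, dlt_val_succ] using hhhv a b c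
    · simpa [hvec, vvec, dlt_val_succ] using hvhv a b c

/-- characterization of the kernel of the prolonged symbol of the
extended Rapcsák operator: a symmetric trilinear form `A` satisfies `A(X, Y, C) = 0`
and `A(X, P_h Y, J Z) = A(X, P_h Z, J Y)` iff `A(X, Y, C) = 0` and the arrays
`(i,j,k) ↦ A(h_i, h_j, v_k)` and `(i,j,k) ↦ A(h_i, v_j, v_k)` are totally
symmetric in `(i, j, k)`. -/
theorem g3P2_characterization (n : ℕ) (hn : 1 ≤ n) (A : Tri n)
    (hsym12 : ∀ X Y Z, A X Y Z = A Y X Z) (hsym23 : ∀ X Y Z, A X Y Z = A X Z Y) :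
    ((∀ X Y, A X Y (Cvec n) = 0) ∧
      (∀ X Y Z, A X (Ph n Y) (Jmap n Z) = A X (Ph n Z) (Jmap n Y)))
    ↔
    ((∀ X Y, A X Y (Cvec n) = 0) ∧
      (∀ i j k : ℕ, 1 ≤ i → i ≤ n → 1 ≤ j → j ≤ n → 1 ≤ k → k ≤ n →
        (A (hvec n i) (hvec n j) (vvec n k) = A (hvec n j) (hvec n i) (vvec n k) ∧
         A (hvec n i) (hvec n j) (vvec n k) = A (hvec n i) (hvec n k) (vvec n j) ∧
         A (hvec n i) (vvec n j) (vvec n k) = A (hvec n j) (vvec n i) (vvec n k) ∧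
         A (hvec n i) (vvec n j) (vvec n k) = A (hvec n i) (vvec n k) (vvec n j)))) :=
  g3P2_characterization_general n A hsym12 hsym23
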